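/- Let (X_i, U_i, ε_i), i ≥ 1, be i.i.d. copies of (X, U, ε) in the errors-in-variables model with g(x) = Σ_{j=0}^{p} β_j^0 x^j, and set W_i = X_i + U_i, Y_i = g(X_i) + ε_i. Assume E|W|^{2p} < ∞, E(|Y|·(1+|W|^p)) < ∞, E|U|^j < ∞ for j ≤ 2p, and that the distribution of X has a nondegenerate continuous component (so that the moment matrix M = (E X^{j+k})_{0≤j,k≤p} is invertible). Define â_j = n^{−1}Σ_{k≤n} W_k^j, Â_j = n^{−1}Σ_{k≤n} Y_k W_k^j, b̂_j = Σ_{k=0}^{j} C(j,k) â_{j−k} P_k(ν_0,…,ν_k), B̂_j = Σ_{k=0}^{j} C(j,k) Â_{j−k} P_k(ν_0,…,ν_k) with ν_j = E(U^j), and β̂ = M̂^{−1} B̂ where M̂ has entries b̂_{j+k} and B̂ = (B̂_0,…,B̂_p)ᵀ. Then β̂ converges in probability to β^0 = (β_0^0,…,β_p^0)ᵀ as n → ∞. -/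

import Mathlib

/-!
By independence of `X` and `U`, `E W^j` is the binomial convolution of the moment sequences
`(E U^k)` and `(E X^l)`; since `E(ε | X, U) = 0`, likewise `E(Y W^j)` is the binomial convolution
of `(E U^k)` and `(E g(X) X^l)`. The recursion defining `P_k` says that `(P_k(ν))` is the inverse
of `ν` for binomial convolution (their exponential generating functions multiply to `1`), so
deconvolving the population moments gives `b_j = E X^j` and `B_j = E g(X) X^j = (M β⁰)_j`.
The Hankel matrix `M` is invertible because `vᵀ M v = E (∑ v_i X^i)²` vanishes only if the law
of `X` sits on the finitely many roots of a nonzero polynomial. The strong law makes the sample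
moments converge almost surely, `M ↦ M⁻¹` is continuous at the invertible `M`, and almost sure
convergence implies convergence in probability.
-/

open MeasureTheory ProbabilityTheory Filter Topology Finset Matrix

section BinomialConvolution

section Semiring

variable {R : Type*} [CommSemiring R]

def binomConv (a b : ℕ → R) (n : ℕ) : R :=
  ∑ k ∈ range (n + 1), (n.choose k : R) * a (n - k) * b k

variable [TopologicalSpace R] [IsTopologicalSemiring R]

theorem tendsto_binomConv {ι : Type*} {l : Filter ι} {a : ι → ℕ → R} {a₀ : ℕ → R} (b : ℕ → R)
    {n : ℕ} (h : ∀ m ≤ n, Tendsto (fun i => a i m) l (𝓝 (a₀ m))) :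
    Tendsto (fun i => binomConv (a i) b n) l (𝓝 (binomConv a₀ b n)) :=
  tendsto_finsetSum _ fun _ _ => ((h _ (Nat.sub_le _ _)).const_mul _).mul_const _

theorem continuous_binomConv (b : ℕ → R) (n : ℕ) :
    Continuous fun a : ℕ → R => binomConv a b n :=
  continuous_finsetSum _ fun _ _ => ((continuous_apply _).const_mul _).mul_const _

end Semiring

variable {K : Type*} [Field K] [CharZero K]

def egf (a : ℕ → K) : PowerSeries K := PowerSeries.mk fun n => a n / n.factorial

theorem egf_injective : Function.Injective (egf (K := K)) := fun a b h => funext fun n => by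
  simpa [egf, Nat.factorial_ne_zero] using congrArg (PowerSeries.coeff n) h

theorem egf_binomConv (a b : ℕ → K) : egf (binomConv a b) = egf a * egf b := by
  ext n
  rw [mul_comm, PowerSeries.coeff_mul, Nat.sum_antidiagonal_eq_sum_range_succ
    fun i k => PowerSeries.coeff i (egf b) * PowerSeries.coeff k (egf a)]
  simp only [egf, PowerSeries.coeff_mk, binomConv, sum_div]
  refine sum_congr rfl fun k hk => ?_
  rw [Nat.cast_choose K (Nat.lt_succ_iff.mp (mem_range.mp hk))]
  have : (n.factorial : K) ≠ 0 := Nat.cast_ne_zero.2 n.factorial_ne_zero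
  field_simp

theorem egf_mul_egf_eq_one {ν q : ℕ → K} (hν : ν 0 ≠ 0) (hq₀ : q 0 = (ν 0)⁻¹)
    (hq : ∀ j, 1 ≤ j → ν 0 * q j = -∑ k ∈ range j, (j.choose k : K) * ν (j - k) * q k) :
    egf ν * egf q = 1 := by
  rw [← egf_binomConv]
  ext n
  rw [egf, PowerSeries.coeff_mk, PowerSeries.coeff_one]
  rcases Nat.eq_zero_or_pos n with rfl | hn
  · simp [binomConv, hq₀, hν]
  · rw [binomConv, sum_range_succ, if_neg hn.ne', Nat.choose_self, Nat.sub_self, Nat.cast_one,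
      one_mul, hq n hn, add_neg_cancel, zero_div]

theorem binomConv_binomConv_cancel {ν q : ℕ → K} (h : egf ν * egf q = 1) (m : ℕ → K) :
    binomConv (binomConv ν m) q = m :=
  egf_injective <| by rw [egf_binomConv, egf_binomConv, mul_right_comm, h, one_mul]

end BinomialConvolution

def hankelMatrix {R : Type*} (n : ℕ) (m : ℕ → R) : Matrix (Fin n) (Fin n) R :=
  Matrix.of fun j k => m (j + k)

section MomentMatrix

variable {Ω : Type*} [MeasurableSpace Ω] {μ : Measure Ω} {X : Ω → ℝ} {p : ℕ}

theorem sq_sum_eq_sum_sum_pow_add (v : Fin (p + 1) → ℝ) (x : ℝ) :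
    (∑ i, v i * x ^ (i : ℕ)) ^ 2 = ∑ i, ∑ j, v i * v j * x ^ (i + j : ℕ) := by
  rw [sq, sum_mul_sum]
  exact sum_congr rfl fun i _ => sum_congr rfl fun j _ => by ring

theorem integrable_sq_sum_pow (hX : ∀ k ≤ 2 * p, Integrable (fun ω => X ω ^ k) μ)
    (v : Fin (p + 1) → ℝ) : Integrable (fun ω => (∑ i, v i * X ω ^ (i : ℕ)) ^ 2) μ := by
  simp_rw [sq_sum_eq_sum_sum_pow_add]
  exact integrable_finsetSum _ fun i _ => integrable_finsetSum _ fun j _ =>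
    (hX _ (by omega)).const_mul _

theorem dotProduct_hankelMatrix_moments (hX : ∀ k ≤ 2 * p, Integrable (fun ω => X ω ^ k) μ)
    (v : Fin (p + 1) → ℝ) :
    v ⬝ᵥ (hankelMatrix (p + 1) (fun k => ∫ ω, X ω ^ k ∂μ) *ᵥ v)
      = ∫ ω, (∑ i, v i * X ω ^ (i : ℕ)) ^ 2 ∂μ := by
  simp_rw [sq_sum_eq_sum_sum_pow_add]
  rw [integral_finsetSum _ fun i _ => integrable_finsetSum _ fun j _ =>
    (hX _ (by omega)).const_mul _]
  refine sum_congr rfl fun i _ => ?_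
  rw [integral_finsetSum _ fun j _ => (hX _ (by omega)).const_mul _, mulVec, dotProduct, mul_sum]
  refine sum_congr rfl fun j _ => ?_
  rw [integral_const_mul, hankelMatrix, of_apply]
  ring

theorem det_hankelMatrix_moments_ne_zero (hXm : Measurable X)
    (hX : ∀ k ≤ 2 * p, Integrable (fun ω => X ω ^ k) μ)
    (hXc : ¬ ∃ S : Set ℝ, S.Countable ∧ μ.map X Sᶜ = 0) :
    (hankelMatrix (p + 1) fun k => ∫ ω, X ω ^ k ∂μ).det ≠ 0 := by
  intro hdet
  obtain ⟨v, hv, hMv⟩ := exists_mulVec_eq_zero_iff.mpr hdet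
  set P := Polynomial.ofFn (p + 1) v
  have hP : P ≠ 0 := by simpa [P] using (Polynomial.injective_ofFn (p + 1)).ne hv
  have hroots := Polynomial.finite_setOfPred_isRoot hP
  have hsq : ∀ᵐ ω ∂μ, (∑ i, v i * X ω ^ (i : ℕ)) ^ 2 = 0 := by
    refine (integral_eq_zero_iff_of_nonneg (fun ω => sq_nonneg _)
      (integrable_sq_sum_pow hX v)).mp ?_
    rw [← dotProduct_hankelMatrix_moments hX, hMv, dotProduct_zero]
  refine hXc ⟨{x | P.IsRoot x}, hroots.countable, ?_⟩
  rw [Measure.map_apply hXm hroots.measurableSet.compl]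
  change μ {ω | ¬ P.IsRoot (X ω)} = 0
  rw [← ae_iff]
  filter_upwards [hsq] with ω hω
  simpa [P, Polynomial.ofFn_eq_sum_monomial, Polynomial.eval_finsetSum] using hω

end MomentMatrix

theorem integral_mul_eq_zero_of_condExp_eq_zero {Ω : Type*} {m m₀ : MeasurableSpace Ω}
    {μ : Measure[m₀] Ω} [IsFiniteMeasure μ] (hm : m ≤ m₀) {φ ε : Ω → ℝ}
    (hφ : StronglyMeasurable[m] φ) (hφε : Integrable (φ * ε) μ) (hε : Integrable ε μ)
    (hcond : μ[ε | m] =ᵐ[μ] 0) :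
    ∫ ω, φ ω * ε ω ∂μ = 0 := by
  have h : μ[φ * ε | m] =ᵐ[μ] 0 := by
    filter_upwards [condExp_mul_of_stronglyMeasurable_left hφ hφε hε, hcond] with ω h₁ h₂
    simp [h₁, h₂]
  change ∫ ω, (φ * ε) ω ∂μ = 0
  rw [← integral_condExp hm, integral_congr_ae h, Pi.zero_def, integral_zero]

section Moments

variable {Ω : Type*} [MeasurableSpace Ω] {μ : Measure Ω}

theorem pow_le_one_add_pow {a : ℝ} (ha : 0 ≤ a) {j N : ℕ} (h : j ≤ N) : a ^ j ≤ 1 + a ^ N := by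
  rcases le_total a 1 with h1 | h1
  · exact (pow_le_one₀ ha h1).trans (le_add_of_nonneg_right (by positivity))
  · exact (pow_le_pow_right₀ h1 h).trans (le_add_of_nonneg_left zero_le_one)

theorem integrable_pow_of_le [IsFiniteMeasure μ] {f : Ω → ℝ} (hf : AEStronglyMeasurable f μ)
    {k N : ℕ} (hkN : k ≤ N) (h : Integrable (fun ω => |f ω| ^ N) μ) :
    Integrable (fun ω => f ω ^ k) μ :=
  (integrable_norm_iff (hf.pow k)).mp <| by
    simpa [norm_pow] using integrable_norm_pow_of_le hf hkN (by simpa using h)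

theorem integrable_mul_pow_of_le {f w : Ω → ℝ} (hf : AEStronglyMeasurable f μ)
    (hw : AEStronglyMeasurable w μ) {j N : ℕ} (hjN : j ≤ N)
    (h : Integrable (fun ω => |f ω| * (1 + |w ω| ^ N)) μ) :
    Integrable (fun ω => f ω * w ω ^ j) μ := by
  refine h.mono' (hf.mul (hw.pow j)) (.of_forall fun ω => ?_)
  rw [norm_mul, norm_pow, Real.norm_eq_abs, Real.norm_eq_abs]
  gcongr
  exact pow_le_one_add_pow (abs_nonneg _) hjN

theorem integrable_abs_sub_pow {f g : Ω → ℝ} (hf : AEStronglyMeasurable f μ)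
    (hg : AEStronglyMeasurable g μ) {N : ℕ} (hfN : Integrable (fun ω => |f ω| ^ N) μ)
    (hgN : Integrable (fun ω => |g ω| ^ N) μ) :
    Integrable (fun ω => |f ω - g ω| ^ N) μ := by
  refine ((hfN.add hgN).const_mul (2 ^ (N - 1))).mono' ((hf.sub hg).norm.pow N)
    (.of_forall fun ω => ?_)
  rw [Real.norm_eq_abs, abs_pow, abs_abs]
  calc |f ω - g ω| ^ N ≤ (|f ω| + |g ω|) ^ N := by gcongr; exact abs_sub _ _
    _ ≤ 2 ^ (N - 1) * (|f ω| ^ N + |g ω| ^ N) := add_pow_le (abs_nonneg _) (abs_nonneg _) N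

section Polynomial

variable {X : Ω → ℝ} {p : ℕ} (β : Fin (p + 1) → ℝ)

theorem sum_mul_pow_mul_pow (x : ℝ) (l : ℕ) :
    (∑ i, β i * x ^ (i : ℕ)) * x ^ l = ∑ i, β i * x ^ (i + l : ℕ) := by
  rw [sum_mul]
  exact sum_congr rfl fun i _ => by ring

theorem integrable_sum_mul_pow_mul_pow (hX : ∀ k ≤ 2 * p, Integrable (fun ω => X ω ^ k) μ)
    {l : ℕ} (hl : l ≤ p) : Integrable (fun ω => (∑ i, β i * X ω ^ (i : ℕ)) * X ω ^ l) μ := by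
  simp_rw [sum_mul_pow_mul_pow]
  exact integrable_finsetSum _ fun i _ => (hX _ (by omega)).const_mul _

theorem integral_sum_mul_pow_mul_pow (hX : ∀ k ≤ 2 * p, Integrable (fun ω => X ω ^ k) μ)
    {l : ℕ} (hl : l ≤ p) :
    ∫ ω, (∑ i, β i * X ω ^ (i : ℕ)) * X ω ^ l ∂μ = ∑ i, β i * ∫ ω, X ω ^ (i + l : ℕ) ∂μ := by
  simp_rw [sum_mul_pow_mul_pow]
  rw [integral_finsetSum _ fun i _ => (hX _ (by omega)).const_mul _]
  simp_rw [integral_const_mul]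

end Polynomial

section Independent

variable {X U : Ω → ℝ} {f : ℝ → ℝ} {m : ℕ}

theorem mul_add_pow_eq_sum (f : ℝ → ℝ) (x u : ℝ) (m : ℕ) :
    f x * (x + u) ^ m
      = ∑ l ∈ range (m + 1), (m.choose l : ℝ) * (u ^ (m - l) * (f x * x ^ l)) := by
  rw [add_pow, mul_sum]
  exact sum_congr rfl fun l _ => by ring

theorem ProbabilityTheory.IndepFun.pow_indepFun_mul_pow (hXU : IndepFun X U μ)
    (hf : Measurable f) (l k : ℕ) :
    IndepFun (fun ω => U ω ^ k) (fun ω => f (X ω) * X ω ^ l) μ :=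
  (hXU.comp (hf.mul (measurable_id.pow_const l)) (measurable_id.pow_const k)).symm

theorem integrable_pow_mul_mul_pow (hXU : IndepFun X U μ) (hf : Measurable f)
    (hfX : ∀ l ≤ m, Integrable (fun ω => f (X ω) * X ω ^ l) μ)
    (hU : ∀ l ≤ m, Integrable (fun ω => U ω ^ l) μ) {l : ℕ} (hl : l ∈ range (m + 1)) :
    Integrable (fun ω => U ω ^ (m - l) * (f (X ω) * X ω ^ l)) μ :=
  (hXU.pow_indepFun_mul_pow hf l (m - l)).integrable_mul (hU _ (Nat.sub_le _ _))
    (hfX l (Nat.lt_succ_iff.mp (mem_range.mp hl)))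

theorem integrable_mul_add_pow (hXU : IndepFun X U μ) (hf : Measurable f)
    (hfX : ∀ l ≤ m, Integrable (fun ω => f (X ω) * X ω ^ l) μ)
    (hU : ∀ l ≤ m, Integrable (fun ω => U ω ^ l) μ) :
    Integrable (fun ω => f (X ω) * (X ω + U ω) ^ m) μ := by
  simp_rw [mul_add_pow_eq_sum f]
  exact integrable_finsetSum _ fun l hl =>
    (integrable_pow_mul_mul_pow hXU hf hfX hU hl).const_mul _

theorem integral_mul_add_pow (hXU : IndepFun X U μ) (hf : Measurable f)
    (hfX : ∀ l ≤ m, Integrable (fun ω => f (X ω) * X ω ^ l) μ)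
    (hU : ∀ l ≤ m, Integrable (fun ω => U ω ^ l) μ) :
    ∫ ω, f (X ω) * (X ω + U ω) ^ m ∂μ
      = binomConv (fun k => ∫ ω, U ω ^ k ∂μ) (fun l => ∫ ω, f (X ω) * X ω ^ l ∂μ) m := by
  simp_rw [mul_add_pow_eq_sum f]
  rw [integral_finsetSum _ fun l hl => (integrable_pow_mul_mul_pow hXU hf hfX hU hl).const_mul _]
  refine sum_congr rfl fun l hl => ?_
  rw [integral_const_mul, mul_assoc]
  congr 1
  exact (hXU.pow_indepFun_mul_pow hf l (m - l)).integral_fun_mul_eq_mul_integral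
    (hU _ (Nat.sub_le _ _)).1 (hfX l (Nat.lt_succ_iff.mp (mem_range.mp hl))).1

theorem integral_add_pow (hXU : IndepFun X U μ) (hX : ∀ l ≤ m, Integrable (fun ω => X ω ^ l) μ)
    (hU : ∀ l ≤ m, Integrable (fun ω => U ω ^ l) μ) :
    ∫ ω, (X ω + U ω) ^ m ∂μ
      = binomConv (fun k => ∫ ω, U ω ^ k ∂μ) (fun l => ∫ ω, X ω ^ l ∂μ) m := by
  simpa only [one_mul] using
    integral_mul_add_pow (f := fun _ => 1) hXU measurable_const (by simpa only [one_mul]) hU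

theorem integral_add_mul_add_pow_of_condExp_eq_zero [IsFiniteMeasure μ] {ε : Ω → ℝ}
    (hX : Measurable X) (hU' : Measurable U) (hXU : IndepFun X U μ) (hf : Measurable f)
    (hcond : μ[ε | MeasurableSpace.comap (fun ω => (X ω, U ω)) inferInstance] =ᵐ[μ] 0)
    (hε : Integrable ε μ) (hfX : ∀ l ≤ m, Integrable (fun ω => f (X ω) * X ω ^ l) μ)
    (hU : ∀ l ≤ m, Integrable (fun ω => U ω ^ l) μ)
    (hY : Integrable (fun ω => (f (X ω) + ε ω) * (X ω + U ω) ^ m) μ) :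
    ∫ ω, (f (X ω) + ε ω) * (X ω + U ω) ^ m ∂μ
      = binomConv (fun k => ∫ ω, U ω ^ k ∂μ) (fun l => ∫ ω, f (X ω) * X ω ^ l ∂μ) m := by
  have hfW := integrable_mul_add_pow hXU hf hfX hU
  have hWε : Integrable (fun ω => (X ω + U ω) ^ m * ε ω) μ :=
    (hY.sub hfW).congr (.of_forall fun ω => by simp only [Pi.sub_apply]; ring)
  have hW : StronglyMeasurable[MeasurableSpace.comap (fun ω => (X ω, U ω)) inferInstance]
      fun ω => (X ω + U ω) ^ m :=
    (((measurable_fst.add measurable_snd).pow_const m).comp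
      (comap_measurable fun ω => (X ω, U ω))).stronglyMeasurable
  simp_rw [add_mul]
  rw [integral_add hfW (hWε.congr (.of_forall fun ω => mul_comm _ _)),
    integral_mul_add_pow hXU hf hfX hU]
  simp_rw [mul_comm (ε _)]
  rw [integral_mul_eq_zero_of_condExp_eq_zero (hX.prodMk hU').comap_le hW hWε hε hcond, add_zero]

end Independent

theorem ae_forall_le_tendsto_average {E : Type*} [MeasurableSpace E] {Z : ℕ → Ω → E}
    {Z₀ : Ω → E} (hZ : ∀ i, Measurable (Z i)) (hZ₀ : Measurable Z₀) (hind : iIndepFun Z μ)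
    (hident : ∀ i, μ.map (Z i) = μ.map Z₀) {N : ℕ} {φ : ℕ → E → ℝ}
    (hφ : ∀ j ≤ N, Measurable (φ j)) (hint : ∀ j ≤ N, Integrable (fun ω => φ j (Z₀ ω)) μ) :
    ∀ᵐ ω ∂μ, ∀ j ≤ N, Tendsto (fun n : ℕ => (n : ℝ)⁻¹ * ∑ i ∈ range n, φ j (Z i ω)) atTop
      (𝓝 (∫ ω, φ j (Z₀ ω) ∂μ)) := by
  refine ae_all_iff.2 fun j => eventually_imp_distrib_left.2 fun hj => ?_
  have hid : ∀ i, IdentDistrib (fun ω => φ j (Z i ω)) (fun ω => φ j (Z₀ ω)) μ μ := fun i =>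
    (IdentDistrib.mk (hZ i).aemeasurable hZ₀.aemeasurable (hident i)).comp (hφ j hj)
  have hslln := strong_law_ae_real (fun i ω => φ j (Z i ω))
    ((hid 0).integrable_iff.mpr (hint j hj))
    (fun i k hik => (hind.indepFun hik).comp (hφ j hj) (hφ j hj))
    fun i => (hid i).trans (hid 0).symm
  filter_upwards [hslln] with ω hω
  simpa only [(hid 0).integral_eq, div_eq_inv_mul] using hω

end Moments

section InverseMulVec

variable {n : Type*} [Fintype n] [DecidableEq n]

theorem Filter.Tendsto.inv_mulVec {𝕜 ι : Type*} [NormedField 𝕜] {l : Filter ι}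
    {M : ι → Matrix n n 𝕜} {b : ι → n → 𝕜} {A : Matrix n n 𝕜} {c : n → 𝕜}
    (hM : Tendsto M l (𝓝 A)) (hb : Tendsto b l (𝓝 c)) (hA : A.det ≠ 0) :
    Tendsto (fun i => (M i)⁻¹ *ᵥ b i) l (𝓝 (A⁻¹ *ᵥ c)) := by
  have hinv : ContinuousAt Inv.inv A := continuousAt_matrix_inv A <| by
    simpa only [Ring.inverse_eq_inv'] using continuousAt_inv₀ hA
  exact ((continuous_fst.matrix_mulVec continuous_snd).tendsto _).comp
    ((hinv.tendsto.comp hM).prodMk_nhds hb)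

theorem measurable_inv_mulVec :
    Measurable fun x : (n → n → ℝ) × (n → ℝ) => (Matrix.of x.1)⁻¹ *ᵥ x.2 := by
  have hA : Continuous fun x : (n → n → ℝ) × (n → ℝ) => Matrix.of x.1 := continuous_fst
  simp only [Matrix.inv_def, smul_mulVec, Ring.inverse_eq_inv']
  exact (measurable_inv.comp hA.matrix_det.measurable).smul
    (hA.matrix_adjugate.matrix_mulVec continuous_snd).measurable

end InverseMulVec

/-- With `q k = P_k(ν)`, `momentEstimator p q â Â` is the paper's `β̂ = M̂⁻¹ B̂`, where
`b̂ = binomConv â q` and `B̂ = binomConv Â q`. -/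
noncomputable def momentEstimator (p : ℕ) (q a A : ℕ → ℝ) : Fin (p + 1) → ℝ :=
  (hankelMatrix (p + 1) (binomConv a q))⁻¹ *ᵥ fun j => binomConv A q j

theorem measurable_momentEstimator (p : ℕ) (q : ℕ → ℝ) :
    Measurable fun x : (ℕ → ℝ) × (ℕ → ℝ) => momentEstimator p q x.1 x.2 := by
  have hcont : Continuous fun x : (ℕ → ℝ) × (ℕ → ℝ) =>
      (fun j k : Fin (p + 1) => binomConv x.1 q (j + k),
        fun j : Fin (p + 1) => binomConv x.2 q j) :=
    (continuous_pi fun j => continuous_pi fun k =>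
      (continuous_binomConv q _).comp continuous_fst).prodMk
      (continuous_pi fun j => (continuous_binomConv q _).comp continuous_snd)
  have h := measurable_inv_mulVec.comp hcont.measurable
  unfold momentEstimator hankelMatrix
  exact h

theorem hankelMatrix_mulVec_apply {p : ℕ} (m : ℕ → ℝ) (β : Fin (p + 1) → ℝ) (j : Fin (p + 1)) :
    (hankelMatrix (p + 1) m *ᵥ β) j = ∑ i, β i * m (i + j) := by
  simp only [mulVec, dotProduct, hankelMatrix, of_apply, add_comm (j : ℕ), mul_comm]

theorem tendsto_momentEstimator {ι : Type*} {l : Filter ι} {p : ℕ} {ν q m c : ℕ → ℝ}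
    {β : Fin (p + 1) → ℝ} {a A : ι → ℕ → ℝ} (hq : egf ν * egf q = 1)
    (hdet : (hankelMatrix (p + 1) m).det ≠ 0)
    (hc : ∀ j : Fin (p + 1), c j = (hankelMatrix (p + 1) m *ᵥ β) j)
    (ha : ∀ j ≤ 2 * p, Tendsto (fun i => a i j) l (𝓝 (binomConv ν m j)))
    (hA : ∀ j ≤ p, Tendsto (fun i => A i j) l (𝓝 (binomConv ν c j))) :
    Tendsto (fun i => momentEstimator p q (a i) (A i)) l (𝓝 β) := by
  have hM : Tendsto (fun i => hankelMatrix (p + 1) (binomConv (a i) q)) l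
      (𝓝 (hankelMatrix (p + 1) m)) := by
    refine tendsto_pi_nhds.2 fun j => tendsto_pi_nhds.2 fun k => ?_
    simpa only [hankelMatrix, of_apply, binomConv_binomConv_cancel hq] using
      tendsto_binomConv q fun i hi => ha i (by omega)
  have hB : Tendsto (fun i (j : Fin (p + 1)) => binomConv (A i) q j) l
      (𝓝 (hankelMatrix (p + 1) m *ᵥ β)) := by
    refine tendsto_pi_nhds.2 fun j => ?_
    simpa only [← hc, binomConv_binomConv_cancel hq] using
      tendsto_binomConv q fun i hi => hA i (by omega)
  simpa only [momentEstimator, mulVec_mulVec, nonsing_inv_mul _ (isUnit_iff_ne_zero.2 hdet),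
    one_mulVec] using hM.inv_mulVec hB hdet

section ErrorsInVariables

variable {Ω : Type*} [MeasurableSpace Ω] {μ : Measure Ω} [IsProbabilityMeasure μ] {p : ℕ}
  {β : Fin (p + 1) → ℝ} {X U ε : Ω → ℝ} {Xs Us es : ℕ → Ω → ℝ}

theorem ae_tendsto_momentEstimator (hX : Measurable X) (hU : Measurable U) (hε : Measurable ε)
    (hXU : IndepFun X U μ)
    (hcond : μ[ε | MeasurableSpace.comap (fun ω => (X ω, U ω)) inferInstance] =ᵐ[μ] 0)
    (hWmom : Integrable (fun ω => |X ω + U ω| ^ (2 * p)) μ)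
    (hYmom : Integrable (fun ω =>
      |(∑ i, β i * X ω ^ (i : ℕ)) + ε ω| * (1 + |X ω + U ω| ^ p)) μ)
    (hUmom : Integrable (fun ω => |U ω| ^ (2 * p)) μ)
    (hXc : ¬ ∃ S : Set ℝ, S.Countable ∧ μ.map X Sᶜ = 0)
    (hZ : ∀ i, Measurable fun ω => (Xs i ω, Us i ω, es i ω))
    (hiid : iIndepFun (fun i ω => (Xs i ω, Us i ω, es i ω)) μ)
    (hident : ∀ i, μ.map (fun ω => (Xs i ω, Us i ω, es i ω)) = μ.map fun ω => (X ω, U ω, ε ω))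
    {q : ℕ → ℝ} (hq : egf (fun k => ∫ ω, U ω ^ k ∂μ) * egf q = 1) :
    ∀ᵐ ω ∂μ, Tendsto (fun n : ℕ => momentEstimator p q
      (fun j => (n : ℝ)⁻¹ * ∑ i ∈ range n, (Xs i ω + Us i ω) ^ j)
      (fun j => (n : ℝ)⁻¹ * ∑ i ∈ range n,
        ((∑ k, β k * Xs i ω ^ (k : ℕ)) + es i ω) * (Xs i ω + Us i ω) ^ j)) atTop (𝓝 β) := by
  have hUpow : ∀ k ≤ 2 * p, Integrable (fun ω => U ω ^ k) μ := fun k hk =>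
    integrable_pow_of_le hU.aestronglyMeasurable hk hUmom
  have hXpow : ∀ k ≤ 2 * p, Integrable (fun ω => X ω ^ k) μ := fun k hk =>
    integrable_pow_of_le hX.aestronglyMeasurable hk <| by
      simpa using integrable_abs_sub_pow (hX.add hU).aestronglyMeasurable
        hU.aestronglyMeasurable hWmom hUmom
  have hgX : ∀ l ≤ p, Integrable (fun ω => (∑ i, β i * X ω ^ (i : ℕ)) * X ω ^ l) μ :=
    fun l hl => integrable_sum_mul_pow_mul_pow β hXpow hl
  have hYW : ∀ j ≤ p, Integrable (fun ω =>
      ((∑ i, β i * X ω ^ (i : ℕ)) + ε ω) * (X ω + U ω) ^ j) μ := fun j hj =>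
    integrable_mul_pow_of_le (by fun_prop) (by fun_prop) hj hYmom
  have hεint : Integrable ε μ :=
    ((hYW 0 (Nat.zero_le _)).sub (hgX 0 (Nat.zero_le _))).congr (.of_forall fun ω => by simp)
  filter_upwards [ae_forall_le_tendsto_average hZ (by fun_prop) hiid hident
      (φ := fun j z => (z.1 + z.2.1) ^ j) (fun j _ => by fun_prop)
      (fun j hj => integrable_pow_of_le (by fun_prop) hj hWmom),
    ae_forall_le_tendsto_average hZ (by fun_prop) hiid hident
      (φ := fun j z => ((∑ i, β i * z.1 ^ (i : ℕ)) + z.2.2) * (z.1 + z.2.1) ^ j)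
      (fun j _ => by fun_prop) hYW] with ω ha hA
  refine tendsto_momentEstimator hq (det_hankelMatrix_moments_ne_zero hX hXpow hXc)
    (c := fun l => ∫ ω, (∑ i, β i * X ω ^ (i : ℕ)) * X ω ^ l ∂μ)
    (fun j => ?_) (fun j hj => ?_) (fun j hj => ?_)
  · rw [hankelMatrix_mulVec_apply, integral_sum_mul_pow_mul_pow β hXpow (by omega)]
  · rw [← integral_add_pow hXU (fun l hl => hXpow l (hl.trans hj))
      (fun l hl => hUpow l (hl.trans hj))]
    exact ha j hj
  · rw [← integral_add_mul_add_pow_of_condExp_eq_zero (f := fun x => ∑ i, β i * x ^ (i : ℕ))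
      hX hU hXU (by fun_prop) hcond hεint
      (fun l hl => hgX l (hl.trans hj)) (fun l hl => hUpow l (by omega)) (hYW j hj)]
    exact hA j hj

end ErrorsInVariables

/-- In the polynomial errors-in-variables model, the
moment-based estimator `β̂ = M̂⁻¹ B̂` computed from i.i.d. copies
`(X_i, U_i, ε_i)` of `(X, U, ε)` (with `W_i = X_i + U_i`,
`Y_i = g(X_i) + ε_i`, `g(x) = ∑_j β⁰_j x^j`) converges in probability
to `β⁰` as `n → ∞`, under the stated moment conditions and provided the
distribution of `X` has a nondegenerate continuous component. -/
theorem statement4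
    {Ω : Type*} [MeasureSpace Ω] [IsProbabilityMeasure (ℙ : Measure Ω)]
    (p : ℕ) (β0 : Fin (p + 1) → ℝ) (X U ε : Ω → ℝ) (g : ℝ → ℝ)
    (hX : Measurable X) (hU : Measurable U) (hε : Measurable ε)
    (hg : ∀ x, g x = ∑ j : Fin (p + 1), β0 j * x ^ (j : ℕ))
    (hindep : IndepFun X U ℙ)
    (hcond : ℙ[ε | MeasurableSpace.comap (fun ω => (X ω, U ω)) inferInstance] =ᵐ[ℙ] 0)
    (hWmom : Integrable (fun ω => |X ω + U ω| ^ (2 * p)) ℙ)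
    (hYmom : Integrable (fun ω => |g (X ω) + ε ω| * (1 + |X ω + U ω| ^ p)) ℙ)
    (hUmom : ∀ j ≤ 2 * p, Integrable (fun ω => |U ω| ^ j) ℙ)
    (hXcont : ¬ ∃ S : Set ℝ, S.Countable ∧ Measure.map X ℙ Sᶜ = 0)
    (Xs Us es : ℕ → Ω → ℝ)
    (hXs : ∀ i, Measurable (Xs i)) (hUs : ∀ i, Measurable (Us i))
    (hes : ∀ i, Measurable (es i))
    (hiid : iIndepFun
      (fun i ω => (Xs i ω, Us i ω, es i ω)) ℙ)
    (hident : ∀ i, Measure.map (fun ω => (Xs i ω, Us i ω, es i ω)) ℙ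
      = Measure.map (fun ω => (X ω, U ω, ε ω)) ℙ)
    (Ws Ys : ℕ → Ω → ℝ)
    (hWs : ∀ i ω, Ws i ω = Xs i ω + Us i ω)
    (hYs : ∀ i ω, Ys i ω = g (Xs i ω) + es i ω)
    (ν : ℕ → ℝ) (hν : ∀ j, ν j = ∫ ω, (U ω) ^ j ∂ℙ)
    (P : ℕ → (ℕ → ℝ) → ℝ)
    (hP0 : ∀ x : ℕ → ℝ, P 0 x = (x 0)⁻¹)
    (hPrec : ∀ j : ℕ, 1 ≤ j → ∀ x : ℕ → ℝ,
      x 0 * P j x = -∑ k ∈ Finset.range j, (j.choose k : ℝ) * x (j - k) * P k x)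
    (ahat Ahat bhat Bhat : ℕ → ℕ → Ω → ℝ)
    (hahat : ∀ j n ω, ahat j n ω = (n : ℝ)⁻¹ * ∑ k ∈ Finset.range n, (Ws k ω) ^ j)
    (hAhat : ∀ j n ω, Ahat j n ω = (n : ℝ)⁻¹ * ∑ k ∈ Finset.range n, Ys k ω * (Ws k ω) ^ j)
    (hbhat : ∀ j n ω, bhat j n ω
      = ∑ k ∈ Finset.range (j + 1), (j.choose k : ℝ) * ahat (j - k) n ω * P k ν)
    (hBhat : ∀ j n ω, Bhat j n ω
      = ∑ k ∈ Finset.range (j + 1), (j.choose k : ℝ) * Ahat (j - k) n ω * P k ν)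
    (Mhat : ℕ → Ω → Matrix (Fin (p + 1)) (Fin (p + 1)) ℝ)
    (hMhat : ∀ n ω j k, Mhat n ω j k = bhat ((j : ℕ) + (k : ℕ)) n ω)
    (βhat : ℕ → Ω → Fin (p + 1) → ℝ)
    (hβhat : ∀ n ω, βhat n ω = (Mhat n ω)⁻¹.mulVec (fun j => Bhat (j : ℕ) n ω)) :
    TendstoInMeasure ℙ βhat atTop (fun _ => β0) := by
  obtain rfl : g = fun x => ∑ j : Fin (p + 1), β0 j * x ^ (j : ℕ) := funext hg
  obtain rfl : ν = fun j => ∫ ω, U ω ^ j := funext hν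
  have hβ : ∀ n ω, βhat n ω = momentEstimator p (fun k => P k fun j => ∫ ω, U ω ^ j)
      (fun j => ahat j n ω) (fun j => Ahat j n ω) := by
    intro n ω
    rw [hβhat, momentEstimator]
    congr 2
    · ext j k
      rw [hMhat, hbhat]
      rfl
    · ext j
      rw [hBhat]
      rfl
  refine tendstoInMeasure_of_tendsto_ae (fun n => ?_) ?_
  · have hm : Measurable fun ω => ((fun j => ahat j n ω), fun j => Ahat j n ω) := by
      simp only [hahat, hAhat, hWs, hYs]
      fun_prop
    rw [funext (hβ n)]
    exact ((measurable_momentEstimator p _).comp hm).aestronglyMeasurable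
  · filter_upwards [ae_tendsto_momentEstimator hX hU hε hindep hcond hWmom hYmom (hUmom _ le_rfl)
      hXcont (fun i => by fun_prop) hiid hident
      (egf_mul_egf_eq_one (by simp) (hP0 _) fun j hj => hPrec j hj fun k => ∫ ω, U ω ^ k)]
      with ω hω
    simpa only [hβ, hahat, hAhat, hWs, hYs] using hω
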